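/- arXiv:1303.4251 — 2 statements merged into one kernel-verified Lean document; each statement's English description precedes it below -/
import Mathlib

section
/- Let a_n > 0 and u_n = sqrt(a_1 + sqrt(a_2 + ... + sqrt(a_n))). Then for every n ≥ 1, u_{n+1} - u_n ≤ sqrt(a_{n+1}) / (2^n · ∏_{i=1}^n sqrt(a_i + sqrt(a_{i+1} + ... + sqrt(a_n)))), where the i-th factor in the product is the nested square root starting at a_i and ending at a_n. -/
/-! Each tail `nest a n i` is a square root `√Y`, and appending `a (n+1)` raises the radicand by
the increase of the next tail. By concavity, `√X - √Y ≤ (X - Y) / (2√Y)`, so the increase of the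
`i`-th tail is at most that of the `(i+1)`-st divided by `2 · nest a n i`. Iterating from the
innermost tail, whose increase is `√(a (n+1))`, gives the bound. -/

/-- `nest a n i = sqrt (a i + sqrt (a (i+1) + ⋯ + sqrt (a n)))`;
the `n`-th approximant `u n` of the continued square root is `nest a n 1`. -/
noncomputable def nest (a : ℕ → ℝ) (n : ℕ) : ℕ → ℝ
  | i => if _ : i ≤ n then Real.sqrt (a i + nest a n (i + 1)) else 0
termination_by i => n + 1 - i
decreasing_by omega

open Finset

theorem Real.sqrt_sub_sqrt_le_div {x y : ℝ} (hx : 0 ≤ x) (hy : 0 < y) :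
    √x - √y ≤ (x - y) / (2 * √y) := by
  have hsy : 0 < √y := Real.sqrt_pos.mpr hy
  rw [le_div_iff₀ (by positivity)]
  nlinarith [sq_nonneg (√x - √y), Real.sq_sqrt hx, Real.sq_sqrt hy.le]

section Nest

variable {a : ℕ → ℝ} {n i : ℕ}

theorem nest_of_le (h : i ≤ n) : nest a n i = √(a i + nest a n (i + 1)) := by
  rw [nest, dif_pos h]

theorem nest_of_lt (h : n < i) : nest a n i = 0 := by
  rw [nest, dif_neg (by omega)]

variable (a n i) in
theorem nest_nonneg : 0 ≤ nest a n i := by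
  rw [nest]
  split
  · exact Real.sqrt_nonneg _
  · exact le_rfl

theorem nest_le_nest_succ (a : ℕ → ℝ) (n i : ℕ) : nest a n i ≤ nest a (n + 1) i := by
  rcases le_or_gt i n with h | h
  · rw [nest_of_le h, nest_of_le (Nat.le_succ_of_le h)]
    exact Real.sqrt_le_sqrt (by linarith [nest_le_nest_succ a n (i + 1)])
  · rw [nest_of_lt h]
    exact nest_nonneg _ _ _
termination_by n + 1 - i

theorem nest_succ_sub_nest_le_div (ha : 0 < a i) (h : i ≤ n) :
    nest a (n + 1) i - nest a n i ≤
      (nest a (n + 1) (i + 1) - nest a n (i + 1)) / (2 * nest a n i) := by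
  have hX : 0 ≤ a i + nest a (n + 1) (i + 1) := by linarith [nest_nonneg a (n + 1) (i + 1)]
  have hY : 0 < a i + nest a n (i + 1) := by linarith [nest_nonneg a n (i + 1)]
  have key := Real.sqrt_sub_sqrt_le_div hX hY
  rwa [add_sub_add_left_eq_sub, ← nest_of_le h, ← nest_of_le (Nat.le_succ_of_le h)] at key

variable (a n) in
theorem nest_succ_sub_nest_last :
    nest a (n + 1) (n + 1) - nest a n (n + 1) = √(a (n + 1)) := by
  rw [nest_of_le le_rfl, nest_of_lt (Nat.lt_succ_self _), nest_of_lt (Nat.lt_succ_self _),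
    add_zero, sub_zero]

theorem nest_succ_sub_nest_le (hi : i ≤ n + 1) (ha : ∀ j, i ≤ j → j ≤ n → 0 < a j) :
    nest a (n + 1) i - nest a n i ≤
      √(a (n + 1)) / (2 ^ (n + 1 - i) * ∏ j ∈ Icc i n, nest a n j) := by
  induction hi using Nat.decreasingInduction with
  | self => simp [nest_succ_sub_nest_last]
  | of_succ i hin ih =>
    have hi : i ≤ n := Nat.le_of_lt_succ hin
    have hai : 0 < a i := ha i le_rfl hi
    have hpow : 2 ^ (n + 1 - i) = 2 * (2 : ℝ) ^ (n + 1 - (i + 1)) := by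
      rw [← pow_succ']; congr 1; omega
    have hprod : ∏ j ∈ Icc i n, nest a n j = nest a n i * ∏ j ∈ Icc (i + 1) n, nest a n j := by
      rw [Icc_add_one_left_eq_Ioc, mul_prod_Ioc_eq_prod_Icc hi]
    calc nest a (n + 1) i - nest a n i
        ≤ (nest a (n + 1) (i + 1) - nest a n (i + 1)) / (2 * nest a n i) :=
          nest_succ_sub_nest_le_div hai hi
      _ ≤ √(a (n + 1)) / (2 ^ (n + 1 - (i + 1)) * ∏ j ∈ Icc (i + 1) n, nest a n j) /
            (2 * nest a n i) := by
          have hnext := ih fun j hj hjn => ha j (by omega) hjn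
          exact div_le_div_of_nonneg_right hnext (by linarith [nest_nonneg a n i])
      _ = √(a (n + 1)) / (2 ^ (n + 1 - i) * ∏ j ∈ Icc i n, nest a n j) := by
          rw [div_div, hpow, hprod]
          ring

end Nest

theorem herschfeld_inequality (a : ℕ → ℝ) (ha : ∀ n, 1 ≤ n → 0 < a n) :
    ∀ n, 1 ≤ n →
      nest a (n + 1) 1 - nest a n 1 ≤
        Real.sqrt (a (n + 1)) / (2 ^ n * ∏ i ∈ Finset.Icc 1 n, nest a n i) := by
  intro n _
  simpa using nest_succ_sub_nest_le (by omega) fun j hj _ => ha j hj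
end

section
/- Let a_n > 0, r_n positive integers, and v_n the n-th approximant of the continued radical (a_1 + (a_2 + ... + a_n^{1/r_n})^{1/r_2})^{1/r_1}. Then for every n ≥ 1, v_{n+1} - v_n ≤ a_{n+1}^{1/r_{n+1}} / ∏_{i=1}^n (r_i · a_i^{(r_i - 1)/r_i}). -/
/-- `rad a r n i = (a i + (a (i+1) + ⋯ + (a n) ^ (1/r n)) ^ (1/r (i+1))) ^ (1/r i)`;
the `n`-th approximant `v n` of the continued radical is `rad a r n 1`. -/
noncomputable def rad (a : ℕ → ℝ) (r : ℕ → ℕ) (n : ℕ) : ℕ → ℝ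
  | i => if _ : i ≤ n then (a i + rad a r n (i + 1)) ^ ((r i : ℝ)⁻¹) else 0
termination_by i => n + 1 - i
decreasing_by omega

/-- The denesting functions: `den a r 0 y = y`, `den a r k y = (den a r (k-1) y) ^ (r k) - a k`. -/
noncomputable def den (a : ℕ → ℝ) (r : ℕ → ℕ) : ℕ → ℝ → ℝ
  | 0, y => y
  | k + 1, y => (den a r k y) ^ (r (k + 1)) - a (k + 1)

/-! Passing from the `n`-th to the `(n+1)`-st approximant changes the innermost radical by
`a (n+1) ^ (1/r (n+1))`. Each enclosing radical `x ↦ (a i + x) ^ (1/r i)` is concave with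
slope at most `1 / (r i * a i ^ ((r i - 1)/r i))` on `x ≥ 0` (its derivative at `x = 0`),
so going outwards the change is multiplied by at most these slopes. -/

namespace Real

theorem rpow_sub_rpow_le_mul_sub {x y p : ℝ} (hx : 0 < x) (hy : 0 ≤ y) (hp0 : 0 ≤ p)
    (hp1 : p ≤ 1) : y ^ p - x ^ p ≤ p * x ^ (p - 1) * (y - x) := by
  have hbase : -1 ≤ (y - x) / x := by
    rw [le_div_iff₀ hx]
    linarith
  have hy_eq : y = x * (1 + (y - x) / x) := by
    field_simp
    ring
  calc y ^ p - x ^ p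
      = x ^ p * (1 + (y - x) / x) ^ p - x ^ p := by
        rw [← mul_rpow hx.le (by linarith), ← hy_eq]
    _ ≤ x ^ p * (1 + p * ((y - x) / x)) - x ^ p := by
        gcongr
        exact rpow_one_add_le_one_add_mul_self hbase hp0 hp1
    _ = p * (x ^ p / x) * (y - x) := by
        field_simp
        ring
    _ = p * x ^ (p - 1) * (y - x) := by rw [rpow_sub_one hx.ne']

theorem natCast_inv_mul_rpow_inv_sub_one (m : ℕ) {c : ℝ} (hc : 0 < c) :
    (m : ℝ)⁻¹ * c ^ ((m : ℝ)⁻¹ - 1) = ((m : ℝ) * c ^ (((m : ℝ) - 1) / (m : ℝ)))⁻¹ := by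
  rcases Nat.eq_zero_or_pos m with rfl | hm
  · simp -- both sides are `0`, as `(0 : ℝ)⁻¹ = 0`
  have hm' : (m : ℝ) ≠ 0 := by positivity
  rw [mul_inv, ← rpow_neg hc.le]
  congr 2
  field_simp
  ring

theorem add_rpow_inv_sub_add_rpow_inv_le (m : ℕ) {c s t : ℝ} (hc : 0 < c) (ht : 0 ≤ t)
    (hts : t ≤ s) :
    (c + s) ^ ((m : ℝ)⁻¹) - (c + t) ^ ((m : ℝ)⁻¹) ≤
      (s - t) / ((m : ℝ) * c ^ (((m : ℝ) - 1) / (m : ℝ))) := by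
  have hp1 : (m : ℝ)⁻¹ ≤ 1 := by
    rcases Nat.eq_zero_or_pos m with rfl | hm
    · simp
    · exact inv_le_one_of_one_le₀ (by exact_mod_cast hm)
  calc (c + s) ^ ((m : ℝ)⁻¹) - (c + t) ^ ((m : ℝ)⁻¹)
      ≤ (m : ℝ)⁻¹ * (c + t) ^ ((m : ℝ)⁻¹ - 1) * ((c + s) - (c + t)) :=
        rpow_sub_rpow_le_mul_sub (by linarith) (by linarith) (by positivity) hp1
    _ ≤ (m : ℝ)⁻¹ * c ^ ((m : ℝ)⁻¹ - 1) * ((c + s) - (c + t)) := by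
        refine mul_le_mul_of_nonneg_right (mul_le_mul_of_nonneg_left ?_ (by positivity))
          (by linarith)
        exact rpow_le_rpow_of_nonpos hc (by linarith) (by linarith)
    _ = (s - t) / ((m : ℝ) * c ^ (((m : ℝ) - 1) / (m : ℝ))) := by
        rw [natCast_inv_mul_rpow_inv_sub_one m hc]
        ring

end Real

section rad

variable {a : ℕ → ℝ} {r : ℕ → ℕ} {n : ℕ}

theorem rad_of_le {i : ℕ} (h : i ≤ n) :
    rad a r n i = (a i + rad a r n (i + 1)) ^ ((r i : ℝ)⁻¹) := by
  rw [rad, dif_pos h]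

theorem rad_of_lt {i : ℕ} (h : n < i) : rad a r n i = 0 := by
  rw [rad, dif_neg (by omega)]

theorem rad_nonneg {i : ℕ} (ha : ∀ j, i ≤ j → 0 ≤ a j) : 0 ≤ rad a r n i := by
  by_cases h : i ≤ n
  · rw [rad_of_le h]
    exact Real.rpow_nonneg (add_nonneg (ha i le_rfl) (rad_nonneg fun j hj ↦ ha j (by omega))) _
  · rw [rad_of_lt (by omega)]
termination_by n + 1 - i

theorem rad_le_rad_succ {i : ℕ} (ha : ∀ j, i ≤ j → 0 ≤ a j) :
    rad a r n i ≤ rad a r (n + 1) i := by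
  by_cases h : i ≤ n
  · have ha' : ∀ j, i + 1 ≤ j → 0 ≤ a j := fun j hj ↦ ha j (by omega)
    rw [rad_of_le h, rad_of_le (n := n + 1) (by omega)]
    exact Real.rpow_le_rpow (add_nonneg (ha i le_rfl) (rad_nonneg ha'))
      (add_le_add_right (rad_le_rad_succ ha') _) (by positivity)
  · rw [rad_of_lt (by omega)]
    exact rad_nonneg ha
termination_by n + 1 - i

theorem rad_succ_sub_rad_le {i : ℕ} (hi : i ≤ n + 1) (ha : ∀ j, i ≤ j → 0 < a j) :
    rad a r (n + 1) i - rad a r n i ≤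
      a (n + 1) ^ ((r (n + 1) : ℝ)⁻¹) /
        ∏ j ∈ Finset.Icc i n, (r j : ℝ) * a j ^ (((r j : ℝ) - 1) / (r j : ℝ)) := by
  by_cases h : i ≤ n
  · have ha' : ∀ j, i + 1 ≤ j → 0 < a j := fun j hj ↦ ha j (by omega)
    have ha'_le : ∀ j, i + 1 ≤ j → 0 ≤ a j := fun j hj ↦ (ha' j hj).le
    rw [rad_of_le h, rad_of_le (n := n + 1) (by omega), ← Finset.mul_prod_Ioc_eq_prod_Icc h,
      ← Finset.Icc_add_one_left_eq_Ioc, mul_comm, ← div_div]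
    calc _ ≤ (rad a r (n + 1) (i + 1) - rad a r n (i + 1)) /
            ((r i : ℝ) * a i ^ (((r i : ℝ) - 1) / (r i : ℝ))) :=
          Real.add_rpow_inv_sub_add_rpow_inv_le _ (ha i le_rfl) (rad_nonneg ha'_le)
            (rad_le_rad_succ ha'_le)
      _ ≤ _ := by
          have hai : 0 ≤ a i := (ha i le_rfl).le
          gcongr
          exact rad_succ_sub_rad_le (by omega) ha'
  · obtain rfl : i = n + 1 := by omega
    rw [Finset.Icc_eq_empty h, Finset.prod_empty, div_one, rad_of_le le_rfl,
      rad_of_lt (n := n + 1) (by omega), rad_of_lt (n := n) (by omega), add_zero, sub_zero]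
termination_by n + 1 - i

end rad

theorem polya_szego_type_inequality_general (a : ℕ → ℝ) (r : ℕ → ℕ)
    (ha : ∀ n, 1 ≤ n → 0 < a n) :
    ∀ n, 1 ≤ n →
      rad a r (n + 1) 1 - rad a r n 1 ≤
        (a (n + 1)) ^ ((r (n + 1) : ℝ)⁻¹) /
          ∏ i ∈ Finset.Icc 1 n,
            (r i : ℝ) * (a i) ^ (((r i : ℝ) - 1) / (r i : ℝ)) :=
  fun _ _ ↦ rad_succ_sub_rad_le (by omega) ha

theorem polya_szego_type_inequality (a : ℕ → ℝ) (r : ℕ → ℕ)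
    (ha : ∀ n, 1 ≤ n → 0 < a n) (hr : ∀ n, 1 ≤ r n) :
    ∀ n, 1 ≤ n →
      rad a r (n + 1) 1 - rad a r n 1 ≤
        (a (n + 1)) ^ ((r (n + 1) : ℝ)⁻¹) /
          ∏ i ∈ Finset.Icc 1 n,
            (r i : ℝ) * (a i) ^ (((r i : ℝ) - 1) / (r i : ℝ)) :=
  polya_szego_type_inequality_general a r ha
end
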